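/- arXiv:1712.02466 — 5 statements merged into one kernel-verified Lean document; each statement's English description precedes it below -/
import Mathlib

section
/- Let a and b be positive integers and let m be a natural number. Then gcd(a^m, \sum_{i=0}^{m} a^{m-i} b^i) = (gcd(a,b))^m. -/
theorem gcd_pow_sum (a b : ℕ) (m : ℕ) (ha : 0 < a) (hb : 0 < b) :
    Nat.gcd (a ^ m) (∑ i ∈ Finset.range (m + 1), a ^ (m - i) * b ^ i)
      = Nat.gcd a b ^ m := by
  rcases Nat.eq_zero_or_pos m with hm | hm
  · subst hm; simp
  set d := Nat.gcd a b with hd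
  have hd0 : 0 < d := Nat.gcd_pos_of_pos_left b ha
  set a' := a / d with ha'def
  set b' := b / d with hb'def
  have ha' : a = d * a' := (Nat.mul_div_cancel' (Nat.gcd_dvd_left a b) ).symm
  have hb' : b = d * b' := (Nat.mul_div_cancel' (Nat.gcd_dvd_right a b)).symm
  have hcop : Nat.Coprime a' b' := Nat.coprime_div_gcd_div_gcd hd0
  have hsum : (∑ i ∈ Finset.range (m + 1), a ^ (m - i) * b ^ i)
      = d ^ m * ∑ i ∈ Finset.range (m + 1), a' ^ (m - i) * b' ^ i := by
    rw [Finset.mul_sum]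
    refine Finset.sum_congr rfl fun i hi => ?_
    have hi' : i ≤ m := Nat.lt_succ_iff.mp (Finset.mem_range.mp hi)
    calc a ^ (m - i) * b ^ i = (d * a') ^ (m - i) * (d * b') ^ i := by rw [← ha', ← hb']
      _ = d ^ (m - i) * d ^ i * (a' ^ (m - i) * b' ^ i) := by ring
      _ = d ^ m * (a' ^ (m - i) * b' ^ i) := by
          rw [← pow_add, Nat.sub_add_cancel hi']
  have hsplit : (∑ i ∈ Finset.range (m + 1), a' ^ (m - i) * b' ^ i)
      = a' * (∑ i ∈ Finset.range m, a' ^ (m - 1 - i) * b' ^ i) + b' ^ m := by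
    rw [Finset.sum_range_succ, Nat.sub_self, pow_zero, one_mul, Finset.mul_sum]
    congr 1
    refine Finset.sum_congr rfl fun i hi => ?_
    have hi' : i < m := Finset.mem_range.mp hi
    rw [show m - i = (m - 1 - i) + 1 by omega, pow_succ', mul_assoc]
  have hc : Nat.Coprime (a' ^ m)
      (∑ i ∈ Finset.range (m + 1), a' ^ (m - i) * b' ^ i) := by
    rw [hsplit]
    refine Nat.Coprime.pow_left m ?_
    have h1 : Nat.Coprime a' (b' ^ m) := hcop.pow_right m
    have h2 := (Nat.coprime_add_mul_left_right a' (b' ^ m)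
      (∑ i ∈ Finset.range m, a' ^ (m - 1 - i) * b' ^ i)).mpr h1
    rwa [Nat.add_comm] at h2
  conv_lhs => rw [hsum, ha']
  rw [mul_pow, Nat.gcd_mul_left, hc, mul_one]
end

section
/- Let 1 \leq K \leq N be integers and L \geq 0 a real number. Let A^{(1)},\dots,A^{(N)}, B^{(1)},\dots,B^{(N)}, V, W, Q be random variables such that: (i) H(A^\Gamma | V, Q) = H(B^\Gamma | V, Q) for every subset \Gamma \subseteq [N] with |\Gamma| = K; (ii) H(W | B^{[N]}, V, Q) = 0; and (iii) H(W | V, Q) = L. Then H(A^{[N]} | V, Q) \geq KL/N + (K/N) \cdot H(B^{[N]} | V, W, Q). -/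
/-- Shannon entropy (natural logarithm) of a finitely-valued random variable `X`
on a finite probability space with probability mass function `μ`. -/
noncomputable def entropy {Ω V : Type*} [Fintype Ω] [Fintype V] [DecidableEq V]
    (μ : Ω → ℝ) (X : Ω → V) : ℝ :=
  ∑ v : V, Real.negMulLog (∑ ω ∈ Finset.univ.filter (fun ω => X ω = v), μ ω)

/-- Conditional Shannon entropy `H(X | Y) = H(X, Y) - H(Y)`. -/
noncomputable def condEntropy {Ω V U : Type*} [Fintype Ω] [Fintype V] [Fintype U]
    [DecidableEq V] [DecidableEq U] (μ : Ω → ℝ) (X : Ω → V) (Y : Ω → U) : ℝ :=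
  entropy μ (fun ω => (X ω, Y ω)) - entropy μ Y

/-- The joint random variable `(A i)_{i ∈ Γ}` of the subfamily of `(A i)_{i ∈ [N]}`
indexed by the subset `Γ`. -/
def jointOn {Ω V : Type*} {N : ℕ} (Γ : Finset (Fin N)) (A : Fin N → Ω → V) :
    Ω → (Fin N → Option V) :=
  fun ω i => if i ∈ Γ then some (A i ω) else none

open Real Finset

namespace PIRAux

variable {Ω : Type*} [Fintype Ω] {μ : Ω → ℝ}

lemma negMulLog_sum_le {ι : Type*} (s : Finset ι) (p : ι → ℝ) (hp : ∀ i ∈ s, 0 ≤ p i) :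
    Real.negMulLog (∑ i ∈ s, p i) ≤ ∑ i ∈ s, Real.negMulLog (p i) := by
  set S := ∑ i ∈ s, p i with hS
  have hS0 : 0 ≤ S := Finset.sum_nonneg hp
  have : Real.negMulLog S = ∑ i ∈ s, (-(p i) * Real.log S) := by
    rw [Real.negMulLog, ← Finset.sum_neg_distrib, ← Finset.sum_mul]
  rw [this]
  refine Finset.sum_le_sum fun i hi => ?_
  rcases eq_or_lt_of_le (hp i hi) with h0 | h0
  · simp [← h0]
  · have hle : p i ≤ S := Finset.single_le_sum hp hi
    have := Real.log_le_log h0 hle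
    rw [Real.negMulLog, neg_mul, neg_mul]
    nlinarith


private lemma neg_sum_mul {ι : Type*} (s : Finset ι) (f : ι → ℝ) (c : ℝ) :
    -((∑ i ∈ s, f i) * c) = ∑ i ∈ s, -(f i * c) := by
  rw [Finset.sum_mul, ← Finset.sum_neg_distrib]

lemma submod_core {U V T : Type*} [Fintype U] [Fintype V] [Fintype T]
    (p : U → V → T → ℝ) (hp : ∀ u v t, 0 ≤ p u v t) :
    (∑ u, ∑ v, ∑ t, Real.negMulLog (p u v t)) + ∑ t, Real.negMulLog (∑ u, ∑ v, p u v t)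
      ≤ (∑ u, ∑ t, Real.negMulLog (∑ v, p u v t))
        + ∑ v, ∑ t, Real.negMulLog (∑ u, p u v t) := by
  set pXZ : U → T → ℝ := fun u t => ∑ v, p u v t with hpXZ
  set pYZ : V → T → ℝ := fun v t => ∑ u, p u v t with hpYZ
  set pZ : T → ℝ := fun t => ∑ u, ∑ v, p u v t with hpZ
  have hpXZ0 : ∀ u t, 0 ≤ pXZ u t := fun u t => Finset.sum_nonneg fun v _ => hp u v t
  have hpYZ0 : ∀ v t, 0 ≤ pYZ v t := fun v t => Finset.sum_nonneg fun u _ => hp u v t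
  have hpZ0 : ∀ t, 0 ≤ pZ t := fun t => Finset.sum_nonneg fun u _ => hpXZ0 u t
  set q : U → V → T → ℝ := fun u v t => pXZ u t * pYZ v t / pZ t with hq
  have hq0 : ∀ u v t, 0 ≤ q u v t := fun u v t =>
    div_nonneg (mul_nonneg (hpXZ0 u t) (hpYZ0 v t)) (hpZ0 t)
  have key : ∀ u v t,
      p u v t - q u v t ≤
        -(p u v t * Real.log (pXZ u t)) + -(p u v t * Real.log (pYZ v t))
          - -(p u v t * Real.log (p u v t)) - -(p u v t * Real.log (pZ t)) := by
    intro u v t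
    rcases eq_or_lt_of_le (hp u v t) with h0 | h0
    · simp [← h0, hq0 u v t]
    · have hX : 0 < pXZ u t := lt_of_lt_of_le h0 (Finset.single_le_sum
        (fun v _ => hp u v t) (Finset.mem_univ v))
      have hY : 0 < pYZ v t := lt_of_lt_of_le h0 (Finset.single_le_sum
        (fun u _ => hp u v t) (Finset.mem_univ u))
      have hZ : 0 < pZ t := lt_of_lt_of_le hX (Finset.single_le_sum
        (fun u _ => hpXZ0 u t) (Finset.mem_univ u))
      have hqpos : 0 < q u v t := div_pos (mul_pos hX hY) hZ
      have hlog : Real.log (q u v t / p u v t) ≤ q u v t / p u v t - 1 :=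
        Real.log_le_sub_one_of_pos (div_pos hqpos h0)
      have hexp : Real.log (q u v t / p u v t)
          = Real.log (pXZ u t) + Real.log (pYZ v t) - Real.log (pZ t)
            - Real.log (p u v t) := by
        rw [Real.log_div hqpos.ne' h0.ne', hq]
        rw [Real.log_div (mul_pos hX hY).ne' hZ.ne', Real.log_mul hX.ne' hY.ne']
      have h3 := mul_le_mul_of_nonneg_left hlog (le_of_lt h0)
      rw [hexp] at h3
      have h2 : p u v t * (q u v t / p u v t - 1) = q u v t - p u v t := by
        field_simp
      rw [h2] at h3
      nlinarith [h3]
  have hqsum : ∀ t, ∑ u, ∑ v, q u v t ≤ pZ t := by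
    intro t
    have e : ∑ u, ∑ v, q u v t = pZ t * pZ t / pZ t := by
      simp_rw [hq, div_eq_mul_inv, mul_assoc, ← Finset.mul_sum, ← Finset.sum_mul]
      rw [show (∑ v, pYZ v t) = pZ t from Finset.sum_comm,
        show (∑ u, pXZ u t) = pZ t from rfl]
    rw [e]
    rcases eq_or_lt_of_le (hpZ0 t) with h0 | h0
    · simp [← h0]
    · rw [mul_div_assoc, div_self h0.ne', mul_one]
  -- convert the four sums to triple sums over t,u,v
  have eqP : (∑ u, ∑ v, ∑ t, Real.negMulLog (p u v t))
      = ∑ t, ∑ u, ∑ v, -(p u v t * Real.log (p u v t)) := by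
    rw [show (∑ u, ∑ v, ∑ t, Real.negMulLog (p u v t))
        = ∑ u, ∑ t, ∑ v, Real.negMulLog (p u v t) from
      Finset.sum_congr rfl fun u _ => Finset.sum_comm, Finset.sum_comm]
    simp [Real.negMulLog, neg_mul]
  have eqZ : (∑ t, Real.negMulLog (pZ t))
      = ∑ t, ∑ u, ∑ v, -(p u v t * Real.log (pZ t)) := by
    refine Finset.sum_congr rfl fun t _ => ?_
    rw [Real.negMulLog, neg_mul,
      show -(pZ t * Real.log (pZ t)) = ∑ u, -((∑ v, p u v t) * Real.log (pZ t)) from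
        neg_sum_mul _ _ _]
    exact Finset.sum_congr rfl fun u _ => neg_sum_mul _ _ _
  have eqXZ : (∑ u, ∑ t, Real.negMulLog (∑ v, p u v t))
      = ∑ t, ∑ u, ∑ v, -(p u v t * Real.log (pXZ u t)) := by
    rw [Finset.sum_comm]
    refine Finset.sum_congr rfl fun t _ => Finset.sum_congr rfl fun u _ => ?_
    rw [show Real.negMulLog (∑ v, p u v t) = Real.negMulLog (pXZ u t) from rfl,
      Real.negMulLog, neg_mul, ← neg_sum_mul]
  have eqYZ : (∑ v, ∑ t, Real.negMulLog (∑ u, p u v t))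
      = ∑ t, ∑ v, ∑ u, -(p u v t * Real.log (pYZ v t)) := by
    rw [Finset.sum_comm]
    refine Finset.sum_congr rfl fun t _ => Finset.sum_congr rfl fun v _ => ?_
    rw [show Real.negMulLog (∑ u, p u v t) = Real.negMulLog (pYZ v t) from rfl,
      Real.negMulLog, neg_mul, ← neg_sum_mul]
  rw [eqP, eqZ, eqXZ, eqYZ, ← sub_nonneg]
  have eqYZ' : (∑ t, ∑ v, ∑ u, -(p u v t * Real.log (pYZ v t)))
      = ∑ t, ∑ u, ∑ v, -(p u v t * Real.log (pYZ v t)) :=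
    Finset.sum_congr rfl fun t _ => Finset.sum_comm
  rw [eqYZ']
  have comb : (∑ t, ∑ u, ∑ v, -(p u v t * Real.log (pXZ u t)))
        + (∑ t, ∑ u, ∑ v, -(p u v t * Real.log (pYZ v t)))
        - ((∑ t, ∑ u, ∑ v, -(p u v t * Real.log (p u v t)))
          + ∑ t, ∑ u, ∑ v, -(p u v t * Real.log (pZ t)))
      = ∑ t, ∑ u, ∑ v,
          (-(p u v t * Real.log (pXZ u t)) + -(p u v t * Real.log (pYZ v t))
            - -(p u v t * Real.log (p u v t)) - -(p u v t * Real.log (pZ t))) := by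
    simp only [← Finset.sum_add_distrib, ← Finset.sum_sub_distrib]
    refine Finset.sum_congr rfl fun t _ => Finset.sum_congr rfl fun u _ =>
      Finset.sum_congr rfl fun v _ => by ring
  rw [comb]
  have step1 : (0:ℝ) ≤ ∑ t, ∑ u, ∑ v, (p u v t - q u v t) := by
    have : ∀ t, (0:ℝ) ≤ ∑ u, ∑ v, (p u v t - q u v t) := by
      intro t
      simp only [Finset.sum_sub_distrib]
      exact sub_nonneg.2 (hqsum t)
    exact Finset.sum_nonneg fun t _ => this t
  refine le_trans step1 ?_
  exact Finset.sum_le_sum fun t _ => Finset.sum_le_sum fun u _ =>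
    Finset.sum_le_sum fun v _ => key u v t

variable {U V : Type*} [Fintype U] [Fintype V] [DecidableEq U] [DecidableEq V]

lemma entropy_comp_inj (μ : Ω → ℝ) (X : Ω → U) (g : U → V) (hg : Function.Injective g) :
    entropy μ (fun ω => g (X ω)) = entropy μ X := by
  unfold entropy
  rw [← Finset.sum_subset (Finset.subset_univ ((Finset.univ : Finset U).image g))]
  · rw [Finset.sum_image (fun a _ b _ h => hg h)]
    refine Finset.sum_congr rfl fun u _ => ?_
    congr 1
    refine Finset.sum_congr ?_ (fun _ _ => rfl)
    ext ω; simp [hg.eq_iff]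
  · intro v _ hv
    have : Finset.univ.filter (fun ω => g (X ω) = v) = ∅ := by
      ext ω
      simp only [Finset.mem_filter, Finset.mem_univ, true_and, Finset.notMem_empty, iff_false]
      intro h
      exact hv (Finset.mem_image.2 ⟨X ω, Finset.mem_univ _, h⟩)
    simp [this]

lemma entropy_snd_le (hμ : ∀ ω, 0 ≤ μ ω) (X : Ω → U) (Y : Ω → V) :
    entropy μ Y ≤ entropy μ (fun ω => (X ω, Y ω)) := by
  unfold entropy
  rw [Fintype.sum_prod_type_right]
  refine Finset.sum_le_sum fun v _ => ?_
  have hm : (∑ ω ∈ Finset.univ.filter (fun ω => Y ω = v), μ ω)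
      = ∑ u : U, ∑ ω ∈ Finset.univ.filter (fun ω => (X ω, Y ω) = (u, v)), μ ω := by
    have : ∀ u : U, Finset.univ.filter (fun ω => (X ω, Y ω) = (u, v))
        = (Finset.univ.filter (fun ω => Y ω = v)).filter (fun ω => X ω = u) := by
      intro u; ext ω; simp [Prod.ext_iff, and_comm]
    simp_rw [this]
    rw [Finset.sum_fiberwise (Finset.univ.filter (fun ω => Y ω = v)) X μ]
  rw [hm]
  exact negMulLog_sum_le _ _ fun u _ => Finset.sum_nonneg fun ω _ => hμ ω

lemma entropy_comp_le (hμ : ∀ ω, 0 ≤ μ ω) (X : Ω → U) (g : U → V) :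
    entropy μ (fun ω => g (X ω)) ≤ entropy μ X := by
  calc entropy μ (fun ω => g (X ω)) ≤ entropy μ (fun ω => (X ω, g (X ω))) :=
        entropy_snd_le hμ X _
    _ = entropy μ X := entropy_comp_inj μ X (fun u => (u, g u))
        (fun a b h => (Prod.ext_iff.1 h).1)

lemma entropy_le_of_determines (hμ : ∀ ω, 0 ≤ μ ω) {X : Ω → U} {Y : Ω → V}
    (hd : ∀ ω ω', X ω = X ω' → Y ω = Y ω') :
    entropy μ Y ≤ entropy μ X := by
  rcases isEmpty_or_nonempty Ω with hΩ | hΩ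
  · unfold entropy
    rw [Finset.sum_eq_zero fun u _ => ?_, Finset.sum_eq_zero fun v _ => ?_]
    · simp [Finset.univ_eq_empty (α := Ω)]
    · simp [Finset.univ_eq_empty (α := Ω)]
  · classical
    set g : U → V := fun p => if h' : ∃ ω, X ω = p then Y h'.choose
      else Y (Classical.arbitrary Ω) with hg
    have : Y = fun ω => g (X ω) := by
      funext ω
      have h' : ∃ ω', X ω' = X ω := ⟨ω, rfl⟩
      simp only [hg, dif_pos h']
      exact (hd _ _ h'.choose_spec).symm
    rw [this]
    exact entropy_comp_le hμ X g

lemma entropy_congr (hμ : ∀ ω, 0 ≤ μ ω) {X : Ω → U} {Y : Ω → V}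
    (h : ∀ ω ω', X ω = X ω' ↔ Y ω = Y ω') :
    entropy μ X = entropy μ Y :=
  le_antisymm (entropy_le_of_determines hμ (fun ω ω' h' => (h ω ω').2 h'))
    (entropy_le_of_determines hμ (fun ω ω' h' => (h ω ω').1 h'))


lemma mass_split {U V : Type*} [Fintype U] [Fintype V] [DecidableEq U] [DecidableEq V]
    (X : Ω → U) (Y : Ω → V) (v : V) :
    ∑ ω ∈ Finset.univ.filter (fun ω => Y ω = v), μ ω
      = ∑ u : U, ∑ ω ∈ Finset.univ.filter (fun ω => (X ω, Y ω) = (u, v)), μ ω := by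
  have : ∀ u : U, Finset.univ.filter (fun ω => (X ω, Y ω) = (u, v))
      = (Finset.univ.filter (fun ω => Y ω = v)).filter (fun ω => X ω = u) := by
    intro u; ext ω; simp [Prod.ext_iff, and_comm]
  simp_rw [this]
  rw [Finset.sum_fiberwise (Finset.univ.filter (fun ω => Y ω = v)) X μ]

lemma mass_congr {P P' : Ω → Prop} [DecidablePred P] [DecidablePred P']
    (h : ∀ ω, P ω ↔ P' ω) :
    ∑ ω ∈ Finset.univ.filter P, μ ω = ∑ ω ∈ Finset.univ.filter P', μ ω := by
  congr 1
  exact Finset.filter_congr fun ω _ => h ω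

lemma condEntropy_cond_pair_le {U V T : Type*} [Fintype U] [Fintype V] [Fintype T]
    [DecidableEq U] [DecidableEq V] [DecidableEq T]
    (hμ : ∀ ω, 0 ≤ μ ω) (X : Ω → U) (Y : Ω → V) (Z : Ω → T) :
    condEntropy μ X (fun ω => (Y ω, Z ω)) ≤ condEntropy μ X Z := by
  unfold condEntropy
  set p : U → V → T → ℝ := fun u v t =>
    ∑ ω ∈ Finset.univ.filter (fun ω => (X ω, Y ω, Z ω) = (u, v, t)), μ ω with hp
  have hp0 : ∀ u v t, 0 ≤ p u v t := fun u v t =>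
    Finset.sum_nonneg fun ω _ => hμ ω
  have h1 : entropy μ (fun ω => (X ω, Y ω, Z ω))
      = ∑ u, ∑ v, ∑ t, Real.negMulLog (p u v t) := by
    unfold entropy
    rw [Fintype.sum_prod_type]
    exact Finset.sum_congr rfl fun u _ => Fintype.sum_prod_type _
  have h2 : entropy μ (fun ω => (Y ω, Z ω))
      = ∑ v, ∑ t, Real.negMulLog (∑ u, p u v t) := by
    unfold entropy
    rw [Fintype.sum_prod_type]
    refine Finset.sum_congr rfl fun v _ => Finset.sum_congr rfl fun t _ => ?_
    congr 1
    rw [mass_split X (fun ω => (Y ω, Z ω)) (v, t)]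
  have h3 : entropy μ Z = ∑ t, Real.negMulLog (∑ u, ∑ v, p u v t) := by
    unfold entropy
    refine Finset.sum_congr rfl fun t _ => ?_
    congr 1
    rw [mass_split (fun ω => (X ω, Y ω)) Z t, Fintype.sum_prod_type]
    refine Finset.sum_congr rfl fun u _ => Finset.sum_congr rfl fun v _ => ?_
    exact mass_congr fun ω => by simp [Prod.ext_iff, and_assoc]
  have h4 : entropy μ (fun ω => (X ω, Z ω))
      = ∑ u, ∑ t, Real.negMulLog (∑ v, p u v t) := by
    unfold entropy
    rw [Fintype.sum_prod_type]
    refine Finset.sum_congr rfl fun u _ => Finset.sum_congr rfl fun t _ => ?_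
    congr 1
    rw [mass_split Y (fun ω => (X ω, Z ω)) (u, t)]
    exact Finset.sum_congr rfl fun v _ =>
      mass_congr fun ω => by simp [Prod.ext_iff]; tauto
  have hcore := submod_core p hp0
  have e1 : entropy μ (fun ω => (X ω, (Y ω, Z ω))) = entropy μ (fun ω => (X ω, Y ω, Z ω)) := rfl
  rw [e1, h1, h2, h3, h4]
  linarith [hcore]


lemma condEntropy_nonneg (hμ : ∀ ω, 0 ≤ μ ω) {U V : Type*} [Fintype U] [Fintype V]
    [DecidableEq U] [DecidableEq V] (X : Ω → U) (Y : Ω → V) :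
    0 ≤ condEntropy μ X Y :=
  sub_nonneg.2 (entropy_snd_le hμ X Y)

lemma condEntropy_congr (hμ : ∀ ω, 0 ≤ μ ω) {U U' V V' : Type*}
    [Fintype U] [Fintype V] [Fintype U'] [Fintype V']
    [DecidableEq U] [DecidableEq V] [DecidableEq U'] [DecidableEq V']
    {X : Ω → U} {X' : Ω → U'} {Y : Ω → V} {Y' : Ω → V'}
    (hX : ∀ ω ω', X ω = X ω' ↔ X' ω = X' ω') (hY : ∀ ω ω', Y ω = Y ω' ↔ Y' ω = Y' ω') :
    condEntropy μ X Y = condEntropy μ X' Y' := by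
  unfold condEntropy
  rw [entropy_congr hμ hY,
    entropy_congr hμ (X := fun ω => (X ω, Y ω)) (Y := fun ω => (X' ω, Y' ω))
      (fun ω ω' => by simp only [Prod.ext_iff]; rw [hX ω ω', hY ω ω'])]

lemma condEntropy_chain (hμ : ∀ ω, 0 ≤ μ ω) {U V T : Type*}
    [Fintype U] [Fintype V] [Fintype T] [DecidableEq U] [DecidableEq V] [DecidableEq T]
    (X : Ω → U) (Y : Ω → V) (Z : Ω → T) :
    condEntropy μ (fun ω => (X ω, Y ω)) Z
      = condEntropy μ X (fun ω => (Y ω, Z ω)) + condEntropy μ Y Z := by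
  unfold condEntropy
  rw [entropy_congr hμ (X := fun ω => ((X ω, Y ω), Z ω)) (Y := fun ω => (X ω, (Y ω, Z ω)))
    (fun ω ω' => by simp only [Prod.ext_iff]; tauto)]
  ring

lemma condEntropy_comp_le (hμ : ∀ ω, 0 ≤ μ ω) {U V T : Type*}
    [Fintype U] [Fintype V] [Fintype T] [DecidableEq U] [DecidableEq V] [DecidableEq T]
    (X : Ω → U) (C : Ω → T) (g : U → V) :
    condEntropy μ (fun ω => g (X ω)) C ≤ condEntropy μ X C := by
  unfold condEntropy
  refine sub_le_sub_right ?_ _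
  exact entropy_comp_le hμ (fun ω => (X ω, C ω)) (fun p => (g p.1, p.2))


section JointOn

variable {N : ℕ} {α : Type*} [Fintype α] [DecidableEq α]
variable {κ : Type*} [Fintype κ] [DecidableEq κ]

lemma jointOn_eq_iff (S : Finset (Fin N)) (A : Fin N → Ω → α) (ω ω' : Ω) :
    jointOn S A ω = jointOn S A ω' ↔ ∀ i ∈ S, A i ω = A i ω' := by
  constructor
  · intro h i hi
    have := congrFun h i
    simpa [jointOn, hi] using this
  · intro h
    funext i
    by_cases hi : i ∈ S
    · simp [jointOn, hi, h i hi]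
    · simp [jointOn, hi]

lemma condEntropy_jointOn_empty (hμ : ∀ ω, 0 ≤ μ ω) (C : Ω → κ) (B : Fin N → Ω → α) :
    condEntropy μ (jointOn (∅ : Finset (Fin N)) B) C = 0 := by
  unfold condEntropy
  rw [entropy_congr hμ (X := fun ω => (jointOn (∅ : Finset (Fin N)) B ω, C ω)) (Y := C)
    (fun ω ω' => by simp [Prod.ext_iff, jointOn_eq_iff])]
  ring

lemma condEntropy_jointOn_insert (hμ : ∀ ω, 0 ≤ μ ω) (C : Ω → κ) {S : Finset (Fin N)}
    {m : Fin N} (hm : m ∉ S) (B : Fin N → Ω → α) :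
    condEntropy μ (jointOn (insert m S) B) C
      = condEntropy μ (B m) (fun ω => (jointOn S B ω, C ω))
        + condEntropy μ (jointOn S B) C := by
  rw [← condEntropy_chain hμ (B m) (jointOn S B) C]
  refine condEntropy_congr hμ (fun ω ω' => ?_) (fun _ _ => Iff.rfl)
  rw [jointOn_eq_iff, Prod.ext_iff, jointOn_eq_iff, Finset.forall_mem_insert]

lemma cond_jointOn_mono (hμ : ∀ ω, 0 ≤ μ ω) (C : Ω → κ) {S T : Finset (Fin N)}
    (hST : S ⊆ T) {U : Type*} [Fintype U] [DecidableEq U] (X : Ω → U) (B : Fin N → Ω → α) :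
    condEntropy μ X (fun ω => (jointOn T B ω, C ω))
      ≤ condEntropy μ X (fun ω => (jointOn S B ω, C ω)) := by
  have heq : condEntropy μ X (fun ω => (jointOn T B ω, C ω))
      = condEntropy μ X (fun ω => (jointOn (T \ S) B ω, (jointOn S B ω, C ω))) := by
    refine condEntropy_congr hμ (fun _ _ => Iff.rfl) (fun ω ω' => ?_)
    simp only [Prod.ext_iff, jointOn_eq_iff]
    constructor
    · rintro ⟨h1, h2⟩
      exact ⟨fun i hi => h1 i (Finset.mem_sdiff.1 hi).1, fun i hi => h1 i (hST hi), h2⟩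
    · rintro ⟨h1, h2, h3⟩
      refine ⟨fun i hi => ?_, h3⟩
      by_cases hiS : i ∈ S
      · exact h2 i hiS
      · exact h1 i (Finset.mem_sdiff.2 ⟨hi, hiS⟩)
  rw [heq]
  exact condEntropy_cond_pair_le hμ X _ _

set_option maxHeartbeats 1000000 in
lemma condEntropy_jointOn_subset_le (hμ : ∀ ω, 0 ≤ μ ω) (C : Ω → κ)
    (Γ : Finset (Fin N)) (A : Fin N → Ω → α) :
    condEntropy μ (jointOn Γ A) C ≤ condEntropy μ (jointOn Finset.univ A) C := by
  have : jointOn Γ A = fun ω =>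
      (fun g : Fin N → Option α => fun i => if i ∈ Γ then g i else none)
        (jointOn Finset.univ A ω) := by
    funext ω i
    by_cases hi : i ∈ Γ <;> simp [jointOn, hi]
  refine le_trans (le_of_eq (congrArg (fun Z : Ω → (Fin N → Option α) =>
    condEntropy μ Z C) this)) ?_
  exact condEntropy_comp_le hμ (jointOn Finset.univ A) C
    (fun g : Fin N → Option α => fun i => if i ∈ Γ then g i else none)

end JointOn

end PIRAux
/-- Lemma 4: if the answers `A` and `B` look alike on every `K`-subset of the `N`
servers given `(V, Q)`, the record `W` is determined by `(B^{[N]}, V, Q)`, and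
`H(W | V, Q) = L`, then
`H(A^{[N]} | V, Q) ≥ KL/N + (K/N) · H(B^{[N]} | V, W, Q)`. -/
theorem coded_pir_induction_step
    {Ω α β γ δ : Type*} [Fintype Ω] [Fintype α] [Fintype β] [Fintype γ] [Fintype δ]
    [DecidableEq α] [DecidableEq β] [DecidableEq γ] [DecidableEq δ]
    (N K : ℕ) (hK : 1 ≤ K) (hKN : K ≤ N) (L : ℝ) (hL : 0 ≤ L)
    (μ : Ω → ℝ) (hμ : ∀ ω, 0 ≤ μ ω) (hμ1 : ∑ ω, μ ω = 1)
    (A B : Fin N → Ω → α) (V : Ω → β) (W : Ω → γ) (Q : Ω → δ)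
    (hsym : ∀ Γ : Finset (Fin N), Γ.card = K →
      condEntropy μ (jointOn Γ A) (fun ω => (V ω, Q ω)) =
        condEntropy μ (jointOn Γ B) (fun ω => (V ω, Q ω)))
    (hcorr : condEntropy μ W (fun ω => (jointOn Finset.univ B ω, V ω, Q ω)) = 0)
    (hWL : condEntropy μ W (fun ω => (V ω, Q ω)) = L) :
    condEntropy μ (jointOn Finset.univ A) (fun ω => (V ω, Q ω)) ≥
      K * L / N + (K / N : ℝ) *
        condEntropy μ (jointOn Finset.univ B) (fun ω => (V ω, W ω, Q ω)) := by
  classical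
  haveI : NeZero N := ⟨by omega⟩
  have hN : (0:ℝ) < (N:ℝ) := by
    have : 0 < N := by omega
    exact_mod_cast this
  set hstep : Fin N → ℝ := fun i =>
    condEntropy μ (B i) (fun ω => (jointOn (Finset.Iio i) B ω, V ω, Q ω)) with hhstep
  -- Step 1: Han per subset
  have step1 : ∀ Γ : Finset (Fin N), ∑ i ∈ Γ, hstep i ≤
      condEntropy μ (jointOn Γ B) (fun ω => (V ω, Q ω)) := by
    intro Γ
    induction Γ using Finset.strongInduction with
    | _ Γ ih =>
      rcases Γ.eq_empty_or_nonempty with rfl | hne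
      · rw [PIRAux.condEntropy_jointOn_empty hμ _ B]
        simp
      · set m := Γ.max' hne with hm
        have hmem : m ∈ Γ := Γ.max'_mem hne
        have ih' := ih _ (Finset.erase_ssubset hmem)
        have hch : condEntropy μ (jointOn Γ B) (fun ω => (V ω, Q ω))
            = condEntropy μ (B m) (fun ω => (jointOn (Γ.erase m) B ω, (V ω, Q ω)))
              + condEntropy μ (jointOn (Γ.erase m) B) (fun ω => (V ω, Q ω)) := by
          conv_lhs => rw [show Γ = insert m (Γ.erase m) from (Finset.insert_erase hmem).symm]
          exact PIRAux.condEntropy_jointOn_insert hμ _ (Finset.notMem_erase m Γ) B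
        have hsub : Γ.erase m ⊆ Finset.Iio m := by
          intro i hi
          rw [Finset.mem_Iio]
          exact lt_of_le_of_ne (Γ.le_max' i (Finset.mem_of_mem_erase hi))
            (Finset.ne_of_mem_erase hi)
        have hmono : hstep m ≤
            condEntropy μ (B m) (fun ω => (jointOn (Γ.erase m) B ω, (V ω, Q ω))) :=
          PIRAux.cond_jointOn_mono hμ _ hsub (B m) B
        calc ∑ i ∈ Γ, hstep i = hstep m + ∑ i ∈ Γ.erase m, hstep i :=
              (Finset.add_sum_erase _ _ hmem).symm
          _ ≤ condEntropy μ (B m) (fun ω => (jointOn (Γ.erase m) B ω, (V ω, Q ω)))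
              + condEntropy μ (jointOn (Γ.erase m) B) (fun ω => (V ω, Q ω)) :=
              add_le_add hmono ih'
          _ = _ := hch.symm
  -- Step 2: telescoping sum
  have hstep_eq : ∀ i : Fin N, hstep i
      = condEntropy μ (jointOn (Finset.Iic i) B) (fun ω => (V ω, Q ω))
        - condEntropy μ (jointOn (Finset.Iio i) B) (fun ω => (V ω, Q ω)) := by
    intro i
    have h1 := PIRAux.condEntropy_jointOn_insert (μ := μ) hμ
      (fun ω => (V ω, Q ω)) (by simp : i ∉ Finset.Iio i) B
    rw [Finset.Iio_insert] at h1
    rw [hhstep]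
    simp only []
    linarith [h1]
  have step2 : ∑ i : Fin N, hstep i
      = condEntropy μ (jointOn (Finset.univ : Finset (Fin N)) B) (fun ω => (V ω, Q ω)) := by
    set g : ℕ → ℝ := fun n =>
      condEntropy μ (jointOn (Finset.univ.filter fun j : Fin N => (j : ℕ) < n) B)
        (fun ω => (V ω, Q ω)) with hg
    have hIio : ∀ i : Fin N, Finset.Iio i = Finset.univ.filter (fun j : Fin N => (j : ℕ) < i) := by
      intro i; ext j
      rw [Finset.mem_filter, Finset.mem_Iio, Fin.lt_def]
      simp
    have hIic : ∀ i : Fin N, Finset.Iic i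
        = Finset.univ.filter (fun j : Fin N => (j : ℕ) < i + 1) := by
      intro i; ext j
      rw [Finset.mem_filter, Finset.mem_Iic, Fin.le_def]
      simp [Nat.lt_succ_iff]
    have e1 : ∑ i : Fin N, hstep i = ∑ n ∈ Finset.range N, (g (n + 1) - g n) := by
      rw [← Fin.sum_univ_eq_sum_range (fun n => g (n + 1) - g n) N]
      refine Finset.sum_congr rfl fun i _ => ?_
      rw [hstep_eq i, hIio i, hIic i]
    rw [e1, Finset.sum_range_sub g N]
    have hgN : Finset.univ.filter (fun j : Fin N => (j : ℕ) < N) = Finset.univ := by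
      ext j; simp [j.is_lt]
    have hg0 : Finset.univ.filter (fun j : Fin N => (j : ℕ) < 0) = (∅ : Finset (Fin N)) := by
      ext j; simp
    have hgN' : g N = condEntropy μ (jointOn (Finset.univ : Finset (Fin N)) B)
        (fun ω => (V ω, Q ω)) :=
      congrArg (fun S : Finset (Fin N) => condEntropy μ (jointOn S B)
        fun ω => (V ω, Q ω)) hgN
    have hg0' : g 0 = 0 := by
      rw [show g 0 = condEntropy μ (jointOn (∅ : Finset (Fin N)) B) (fun ω => (V ω, Q ω)) from
        congrArg (fun S : Finset (Fin N) => condEntropy μ (jointOn S B)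
          fun ω => (V ω, Q ω)) hg0]
      exact PIRAux.condEntropy_jointOn_empty hμ _ B
    rw [hgN', hg0', sub_zero]
  -- Step 3: the cyclic windows
  set Γt : Fin N → Finset (Fin N) :=
    fun t => Finset.univ.filter (fun i : Fin N => ((i - t : Fin N) : ℕ) < K) with hΓt
  have hD : (Finset.univ.filter (fun u : Fin N => (u : ℕ) < K)).card = K := by
    refine Finset.card_eq_of_bijective (fun i h => ⟨i, lt_of_lt_of_le h hKN⟩) ?_ ?_ ?_
    · intro a ha
      rw [Finset.mem_filter] at ha
      exact ⟨a.val, ha.2, by ext; rfl⟩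
    · intro i h
      rw [Finset.mem_filter]
      exact ⟨Finset.mem_univ _, h⟩
    · intro i j hi hj hij
      simpa using congrArg Fin.val hij
  have hcardΓ : ∀ t, (Γt t).card = K := by
    intro t
    refine Eq.trans ?_ hD
    refine Finset.card_bij' (fun a _ => a - t) (fun a _ => a + t) ?_ ?_ ?_ ?_
    · intro a ha
      simp only [hΓt, Finset.mem_filter, Finset.mem_univ, true_and] at ha ⊢
      exact ha
    · intro a ha
      simp only [hΓt, Finset.mem_filter, Finset.mem_univ, true_and] at ha ⊢
      simpa using ha
    · intro a _; simp
    · intro a _; simp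
  have hcount : ∀ i : Fin N, (Finset.univ.filter fun t : Fin N => i ∈ Γt t).card = K := by
    intro i
    refine Eq.trans ?_ hD
    refine Finset.card_bij' (fun a _ => i - a) (fun a _ => i - a) ?_ ?_ ?_ ?_
    · intro a ha
      simp only [hΓt, Finset.mem_filter, Finset.mem_univ, true_and] at ha ⊢
      exact ha
    · intro a ha
      simp only [hΓt, Finset.mem_filter, Finset.mem_univ, true_and] at ha ⊢
      simpa using ha
    · intro a _; simp
    · intro a _; simp
  -- Step 4: A-side bound for each window
  have step4 : ∀ t : Fin N,
      condEntropy μ (jointOn (Γt t) B) (fun ω => (V ω, Q ω))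
        ≤ condEntropy μ (jointOn Finset.univ A) (fun ω => (V ω, Q ω)) := by
    intro t
    rw [← hsym (Γt t) (hcardΓ t)]
    exact PIRAux.condEntropy_jointOn_subset_le hμ _ (Γt t) A
  -- Step 5: combine
  have swap : ∑ t : Fin N, ∑ i ∈ Γt t, hstep i = (K : ℝ) * ∑ i : Fin N, hstep i := by
    rw [hΓt]
    simp only [Finset.sum_filter]
    rw [Finset.sum_comm, Finset.mul_sum]
    refine Finset.sum_congr rfl fun i _ => ?_
    rw [← Finset.sum_filter, Finset.sum_const]
    have := hcount i
    rw [hΓt] at this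
    simp only [Finset.mem_filter, Finset.mem_univ, true_and] at this
    rw [show (Finset.univ.filter fun t : Fin N => ((i - t : Fin N) : ℕ) < K) =
        (Finset.univ.filter fun t : Fin N => i ∈ Γt t) from by
      rw [hΓt]; ext t; simp, hcount i]
    simp [mul_comm]
  have main : (K : ℝ) * condEntropy μ (jointOn (Finset.univ : Finset (Fin N)) B)
      (fun ω => (V ω, Q ω))
      ≤ (N : ℝ) * condEntropy μ (jointOn Finset.univ A) (fun ω => (V ω, Q ω)) := by
    have h5 : ∑ t : Fin N, ∑ i ∈ Γt t, hstep i
        ≤ ∑ t : Fin N, condEntropy μ (jointOn (Γt t) B) (fun ω => (V ω, Q ω)) :=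
      Finset.sum_le_sum fun t _ => step1 (Γt t)
    have h6 : ∑ t : Fin N, condEntropy μ (jointOn (Γt t) B) (fun ω => (V ω, Q ω))
        ≤ ∑ t : Fin N, condEntropy μ (jointOn Finset.univ A) (fun ω => (V ω, Q ω)) :=
      Finset.sum_le_sum fun t _ => step4 t
    rw [Finset.sum_const, Finset.card_univ, Fintype.card_fin, nsmul_eq_mul] at h6
    rw [swap, step2] at h5
    linarith
  -- Step 6: B decomposition
  have chain1 := PIRAux.condEntropy_chain hμ W (jointOn Finset.univ B) (fun ω => (V ω, Q ω))
  have chain2 := PIRAux.condEntropy_chain hμ (jointOn Finset.univ B) W (fun ω => (V ω, Q ω))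
  have hswap : condEntropy μ (fun ω => (W ω, jointOn Finset.univ B ω)) (fun ω => (V ω, Q ω))
      = condEntropy μ (fun ω => (jointOn Finset.univ B ω, W ω)) (fun ω => (V ω, Q ω)) :=
    PIRAux.condEntropy_congr hμ
      (fun ω ω' => by simp only [Prod.ext_iff]; tauto) (fun _ _ => Iff.rfl)
  have hreorder : condEntropy μ (jointOn Finset.univ B) (fun ω => (W ω, V ω, Q ω))
      = condEntropy μ (jointOn Finset.univ B) (fun ω => (V ω, W ω, Q ω)) :=
    PIRAux.condEntropy_congr hμ (fun _ _ => Iff.rfl)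
      (fun ω ω' => by simp only [Prod.ext_iff]; tauto)
  have hdecomp : condEntropy μ (jointOn (Finset.univ : Finset (Fin N)) B)
      (fun ω => (V ω, Q ω))
      = L + condEntropy μ (jointOn Finset.univ B) (fun ω => (V ω, W ω, Q ω)) := by
    rw [hswap] at chain1
    rw [hcorr] at chain1
    rw [hreorder, hWL] at chain2
    linarith
  rw [ge_iff_le, show (K : ℝ) * L / N + (K / N : ℝ) *
      condEntropy μ (jointOn Finset.univ B) (fun ω => (V ω, W ω, Q ω))
      = (K : ℝ) * (L + condEntropy μ (jointOn Finset.univ B) (fun ω => (V ω, W ω, Q ω))) / N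
      from by ring, div_le_iff₀ hN]
  rw [hdecomp] at main
  linarith
end

section
/- Let 1 \leq K \leq N and M \geq 1 be integers and L \geq 0 a real number. Let W_1,\dots,W_M, Q, and A_\theta^{(i)} (for \theta \in [M], i \in [N]) be random variables; for \Lambda \subseteq [M] write W_\Lambda = (W_j)_{j\in\Lambda}. Assume: (i) H(A_\theta^\Gamma | W_\Lambda, Q) = H(A_{\theta'}^\Gamma | W_\Lambda, Q) for all \theta, \theta' \in [M], all \Lambda \subseteq [M], and all \Gamma \subseteq [N] with |\Gamma| = K; (ii) H(W_\theta | A_\theta^{[N]}, W_\Lambda, Q) = 0 for all \theta \in [M] and all \Lambda \subseteq [M]; (iii) H(W_\theta | W_\Lambda, Q) = L for all \Lambda \subseteq [M] and all \theta \in [M] \setminus \Lambda; (iv) H(A_\theta^{[N]} | W_{[M]}, Q) = 0 for all \theta \in [M]. Then for every \theta \in [M]: H(A_\theta^{[N]} | Q) \geq L \cdot \sum_{i=0}^{M-1} (K/N)^i. -/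
/-!
Peel off one record at a time. Since the answers determine the desired record, the chain rule
gives `H(A_θ | W_Λ, Q) = L + H(A_θ | W_Λ, W_θ, Q)` for `θ ∉ Λ`. Han's inequality, which bounds
the entropy of `N` coordinates by `N / K` times the average entropy of `K` of them, combined with
the symmetry of `K`-subsets of answers, gives `H(A_θ | W_Λ, Q) ≥ (K / N) H(A_θ' | W_Λ, Q)`
for every other `θ'`. Iterating over the `M` records produces the geometric sum.
-/

open Finset Function Real

section Entropy

variable {Ω V U : Type*} [Fintype Ω] {μ : Ω → ℝ} [DecidableEq V] [DecidableEq U]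

noncomputable def pmass (μ : Ω → ℝ) (X : Ω → V) (v : V) : ℝ :=
  ∑ ω ∈ univ.filter (fun ω => X ω = v), μ ω

lemma pmass_nonneg (hμ : ∀ ω, 0 ≤ μ ω) (X : Ω → V) (v : V) : 0 ≤ pmass μ X v :=
  sum_nonneg fun ω _ => hμ ω

lemma pmass_le_pmass_comp (hμ : ∀ ω, 0 ≤ μ ω) (X : Ω → V) (f : V → U) (v : V) :
    pmass μ X v ≤ pmass μ (fun ω => f (X ω)) (f v) :=
  sum_le_sum_of_subset_of_nonneg (fun ω hω => by simp_all) fun ω _ _ => hμ ω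

lemma sum_pmass [Fintype V] (X : Ω → V) : ∑ v, pmass μ X v = ∑ ω, μ ω :=
  sum_fiberwise univ X μ

lemma pmass_comp [Fintype V] (X : Ω → V) (f : V → U) (u : U) :
    pmass μ (fun ω => f (X ω)) u = ∑ v ∈ univ.filter (fun v => f v = u), pmass μ X v := by
  rw [pmass, ← sum_fiberwise_of_maps_to (g := X) (t := univ.filter fun v => f v = u)
    (fun ω hω => by simpa using hω)]
  refine sum_congr rfl fun v hv => sum_congr ?_ fun _ _ => rfl
  ext ω
  simp only [mem_filter, mem_univ, true_and, and_iff_right_iff_imp]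
  rintro rfl
  simpa using hv

lemma sum_pmass_pair [Fintype V] (X : Ω → V) (Y : Ω → U) (u : U) :
    ∑ v, pmass μ (fun ω => (X ω, Y ω)) (v, u) = pmass μ Y u := by
  rw [pmass, ← sum_fiberwise _ X]
  refine sum_congr rfl fun v _ => sum_congr ?_ fun _ _ => rfl
  ext ω
  simp [and_comm]

variable [Fintype V] [Fintype U]

lemma entropy_eq_sum (X : Ω → V) : entropy μ X = ∑ v, -pmass μ X v * log (pmass μ X v) := rfl

lemma entropy_comp_eq_sum (X : Ω → V) (f : V → U) :
    entropy μ (fun ω => f (X ω)) =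
      ∑ v, -pmass μ X v * log (pmass μ (fun ω => f (X ω)) (f v)) := by
  rw [← sum_fiberwise univ f]
  refine sum_congr rfl fun u _ => ?_
  change negMulLog (pmass μ _ u) = _
  rw [negMulLog, neg_mul]
  nth_rw 1 [pmass_comp]
  rw [sum_mul, ← sum_neg_distrib]
  exact sum_congr rfl fun v hv => by rw [(mem_filter.1 hv).2, neg_mul]

lemma entropy_comp_le (hμ : ∀ ω, 0 ≤ μ ω) (X : Ω → V) (f : V → U) :
    entropy μ (fun ω => f (X ω)) ≤ entropy μ X := by
  rw [entropy_comp_eq_sum, entropy_eq_sum]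
  refine sum_le_sum fun v _ => ?_
  rcases (pmass_nonneg hμ X v).eq_or_lt with h | h
  · simp [← h]
  · exact mul_le_mul_of_nonpos_left
      (log_le_log h (pmass_le_pmass_comp hμ X f v)) (neg_nonpos.2 h.le)

lemma entropy_of_isEmpty [IsEmpty Ω] (X : Ω → V) : entropy μ X = 0 := by
  simp [entropy]

lemma entropy_le_of_factorsThrough (hμ : ∀ ω, 0 ≤ μ ω) {X : Ω → V} {Y : Ω → U}
    (h : Y.FactorsThrough X) : entropy μ Y ≤ entropy μ X := by
  rcases isEmpty_or_nonempty Ω with hΩ | ⟨ω⟩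
  · simp [entropy_of_isEmpty]
  · obtain ⟨ω⟩ := ω
    have : Nonempty U := ⟨Y ω⟩
    obtain ⟨e, rfl⟩ := (factorsThrough_iff Y).1 h
    exact entropy_comp_le hμ X e

lemma entropy_congr (hμ : ∀ ω, 0 ≤ μ ω) {X : Ω → V} {Y : Ω → U}
    (h : ∀ ω ω', X ω = X ω' ↔ Y ω = Y ω') : entropy μ X = entropy μ Y :=
  le_antisymm (entropy_le_of_factorsThrough hμ fun _ _ => (h _ _).2)
    (entropy_le_of_factorsThrough hμ fun _ _ => (h _ _).1)

end Entropy

section CondEntropy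

variable {Ω V U T : Type*} [Fintype Ω] {μ : Ω → ℝ}
  [Fintype V] [Fintype U] [Fintype T] [DecidableEq V] [DecidableEq U] [DecidableEq T]

lemma condEntropy_nonneg (hμ : ∀ ω, 0 ≤ μ ω) (X : Ω → V) (Y : Ω → U) :
    0 ≤ condEntropy μ X Y :=
  sub_nonneg.2 (entropy_comp_le hμ (fun ω => (X ω, Y ω)) Prod.snd)

lemma condEntropy_congr_left (hμ : ∀ ω, 0 ≤ μ ω) {X : Ω → V} {X' : Ω → T} (Y : Ω → U)
    (h : ∀ ω ω', X ω = X ω' ↔ X' ω = X' ω') : condEntropy μ X Y = condEntropy μ X' Y := by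
  rw [condEntropy, condEntropy]
  congr 1
  exact entropy_congr hμ fun ω ω' => by simp only [Prod.ext_iff, h]

lemma condEntropy_congr_right (hμ : ∀ ω, 0 ≤ μ ω) (X : Ω → V) {Y : Ω → U} {Y' : Ω → T}
    (h : ∀ ω ω', Y ω = Y ω' ↔ Y' ω = Y' ω') : condEntropy μ X Y = condEntropy μ X Y' := by
  rw [condEntropy, condEntropy, entropy_congr hμ h]
  congr 1
  exact entropy_congr hμ fun ω ω' => by simp only [Prod.ext_iff, h]

lemma condEntropy_eq_zero_of_factorsThrough (hμ : ∀ ω, 0 ≤ μ ω) {X : Ω → V} {Y : Ω → U}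
    (h : X.FactorsThrough Y) : condEntropy μ X Y = 0 :=
  sub_eq_zero.2 <| entropy_congr hμ fun _ _ =>
    ⟨fun h' => (Prod.ext_iff.1 h').2, fun h' => Prod.ext (h h') h'⟩

lemma condEntropy_le_of_factorsThrough_left (hμ : ∀ ω, 0 ≤ μ ω) {X : Ω → V} {X' : Ω → T}
    (h : X'.FactorsThrough X) (Y : Ω → U) : condEntropy μ X' Y ≤ condEntropy μ X Y := by
  unfold condEntropy
  exact sub_le_sub_right (entropy_le_of_factorsThrough (X := fun ω => (X ω, Y ω))
    (Y := fun ω => (X' ω, Y ω)) hμ fun _ _ h' =>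
    Prod.ext (h (Prod.ext_iff.1 h').1) (Prod.ext_iff.1 h').2) _

lemma condEntropy_pair_left (hμ : ∀ ω, 0 ≤ μ ω) (X : Ω → V) (Z : Ω → T) (Y : Ω → U) :
    condEntropy μ (fun ω => (X ω, Z ω)) Y =
      condEntropy μ Z Y + condEntropy μ X (fun ω => (Z ω, Y ω)) := by
  have h : entropy μ (fun ω => ((X ω, Z ω), Y ω)) = entropy μ (fun ω => (X ω, Z ω, Y ω)) :=
    entropy_congr hμ fun ω ω' => by simp only [Prod.ext_iff, and_assoc]
  rw [condEntropy, condEntropy, condEntropy, h]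
  ring

lemma condEntropy_eq_add_of_condEntropy_eq_zero (hμ : ∀ ω, 0 ≤ μ ω) {X : Ω → V}
    {Z : Ω → T} {Y : Ω → U} (h : condEntropy μ Z (fun ω => (X ω, Y ω)) = 0) :
    condEntropy μ X Y = condEntropy μ Z Y + condEntropy μ X (fun ω => (Z ω, Y ω)) := by
  have hswap : condEntropy μ (fun ω => (Z ω, X ω)) Y = condEntropy μ (fun ω => (X ω, Z ω)) Y :=
    condEntropy_congr_left hμ Y fun ω ω' => by simp only [Prod.ext_iff, and_comm]
  rw [condEntropy_pair_left hμ, condEntropy_pair_left hμ, h, add_zero] at hswap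
  exact hswap

lemma mul_log_add_log_sub_log_sub_log_le {a b c d : ℝ} (ha : 0 ≤ a) (hb : a ≤ b) (hc : a ≤ c)
    (hd : a ≤ d) : a * (log b + log c - log a - log d) ≤ b * c / d - a := by
  rcases ha.eq_or_lt with rfl | ha
  · simpa using div_nonneg (mul_nonneg hb hc) hd
  have hb0 := ha.trans_le hb
  have hc0 := ha.trans_le hc
  have hd0 := ha.trans_le hd
  have hbcad : 0 < b * c / (a * d) := div_pos (mul_pos hb0 hc0) (mul_pos ha hd0)
  have hlog : log (b * c / (a * d)) = log b + log c - log a - log d := by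
    rw [log_div (mul_pos hb0 hc0).ne' (mul_pos ha hd0).ne', log_mul hb0.ne' hc0.ne',
      log_mul ha.ne' hd0.ne']
    ring
  calc a * (log b + log c - log a - log d) ≤ a * (b * c / (a * d) - 1) := by
        rw [← hlog]; exact mul_le_mul_of_nonneg_left (log_le_sub_one_of_pos hbcad) ha.le
    _ = b * c / d - a := by field_simp [ha.ne', hd0.ne']

lemma mul_div_le_of_nonneg {a t : ℝ} (ht : 0 ≤ t) : a * t / a ≤ t := by
  rcases eq_or_ne a 0 with rfl | ha
  · simpa using ht
  · rw [mul_div_cancel_left₀ t ha]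

lemma condEntropy_pair_right_le (hμ : ∀ ω, 0 ≤ μ ω) (X : Ω → V) (Z : Ω → T) (Y : Ω → U) :
    condEntropy μ X (fun ω => (Z ω, Y ω)) ≤ condEntropy μ X Y := by
  set J : Ω → V × T × U := fun ω => (X ω, Z ω, Y ω)
  set p := pmass μ J
  set pXY := pmass μ (fun ω => (X ω, Y ω))
  set pZY := pmass μ (fun ω => (Z ω, Y ω))
  set pY := pmass μ Y
  -- Gibbs' inequality against the weights `pXY * pZY / pY`, whose total mass is at most that of `p`
  have hgibbs : ∀ v : V × T × U,
      p v * (log (pXY (v.1, v.2.2)) + log (pZY v.2) - log (p v) - log (pY v.2.2)) ≤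
        pXY (v.1, v.2.2) * pZY v.2 / pY v.2.2 - p v := fun v =>
    mul_log_add_log_sub_log_sub_log_le (pmass_nonneg hμ J v)
      (pmass_le_pmass_comp hμ J (fun v => (v.1, v.2.2)) v)
      (pmass_le_pmass_comp hμ J Prod.snd v) (pmass_le_pmass_comp hμ J (fun v => v.2.2) v)
  have hmass : ∑ v : V × T × U, pXY (v.1, v.2.2) * pZY v.2 / pY v.2.2 ≤ ∑ v, p v := calc
    _ = ∑ w : T × U, (∑ x, pXY (x, w.2)) * pZY w / pY w.2 := by
        rw [Fintype.sum_prod_type, sum_comm]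
        simp only [sum_mul, sum_div]
    _ = ∑ w : T × U, pY w.2 * pZY w / pY w.2 := by simp only [pXY, pY, sum_pmass_pair]
    _ ≤ ∑ w, pZY w := sum_le_sum fun w _ => mul_div_le_of_nonneg (pmass_nonneg hμ _ w)
    _ = ∑ v, p v := by rw [sum_pmass, sum_pmass]
  have hsplit : condEntropy μ X Y - condEntropy μ X (fun ω => (Z ω, Y ω)) =
      ∑ v, -(p v * (log (pXY (v.1, v.2.2)) + log (pZY v.2) - log (p v) - log (pY v.2.2))) := by
    rw [condEntropy, condEntropy, entropy_comp_eq_sum J fun v => (v.1, v.2.2),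
      entropy_comp_eq_sum J fun v => v.2.2, entropy_eq_sum J,
      entropy_comp_eq_sum J Prod.snd]
    simp only [← sum_sub_distrib]
    exact sum_congr rfl fun v _ => by ring
  have hgibbs_sum := sum_le_sum fun v (_ : v ∈ univ) => hgibbs v
  rw [sum_sub_distrib] at hgibbs_sum
  rw [sum_neg_distrib] at hsplit
  linarith

lemma condEntropy_le_of_factorsThrough_right (hμ : ∀ ω, 0 ≤ μ ω) (X : Ω → V) {Z : Ω → T}
    {Z' : Ω → U} (h : Z'.FactorsThrough Z) : condEntropy μ X Z ≤ condEntropy μ X Z' := by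
  rw [condEntropy_congr_right hμ X (Y' := fun ω => (Z ω, Z' ω)) fun ω ω' =>
    ⟨fun h' => Prod.ext h' (h h'), fun h' => (Prod.ext_iff.1 h').1⟩]
  exact condEntropy_pair_right_le hμ X Z Z'

end CondEntropy

section JointOn

variable {Ω V U T : Type*} {n : ℕ}

lemma jointOn_eq_jointOn_iff {s : Finset (Fin n)} {A : Fin n → Ω → V} {ω ω' : Ω} :
    jointOn s A ω = jointOn s A ω' ↔ ∀ i ∈ s, A i ω = A i ω' := by
  refine ⟨fun h i hi => by simpa [jointOn, hi] using congrFun h i, fun h => funext fun i => ?_⟩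
  by_cases hi : i ∈ s <;> simp [jointOn, hi, h]

lemma factorsThrough_jointOn_of_subset {s t : Finset (Fin n)} (hts : t ⊆ s)
    (A : Fin n → Ω → V) : (jointOn t A).FactorsThrough (jointOn s A) := fun _ _ h =>
  jointOn_eq_jointOn_iff.2 fun i hi => jointOn_eq_jointOn_iff.1 h i (hts hi)

variable [Fintype Ω] {μ : Ω → ℝ}
  [Fintype V] [Fintype U] [Fintype T] [DecidableEq V] [DecidableEq U] [DecidableEq T]

lemma condEntropy_jointOn_insert_left (hμ : ∀ ω, 0 ≤ μ ω) (A : Fin n → Ω → V) (a : Fin n)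
    (s : Finset (Fin n)) (Y : Ω → U) :
    condEntropy μ (jointOn (insert a s) A) Y =
      condEntropy μ (fun ω => (A a ω, jointOn s A ω)) Y :=
  condEntropy_congr_left hμ Y fun _ _ => by
    simp only [jointOn_eq_jointOn_iff, forall_mem_insert, Prod.ext_iff]

lemma condEntropy_jointOn_insert_right (hμ : ∀ ω, 0 ≤ μ ω) (X : Ω → T) (W : Fin n → Ω → V)
    (a : Fin n) (s : Finset (Fin n)) (Q : Ω → U) :
    condEntropy μ X (fun ω => (jointOn (insert a s) W ω, Q ω)) =
      condEntropy μ X (fun ω => (W a ω, jointOn s W ω, Q ω)) :=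
  condEntropy_congr_right hμ X fun _ _ => by
    simp only [jointOn_eq_jointOn_iff, forall_mem_insert, Prod.ext_iff, and_assoc]

lemma condEntropy_jointOn_empty_right (hμ : ∀ ω, 0 ≤ μ ω) (X : Ω → T) (W : Fin n → Ω → V)
    (Q : Ω → U) : condEntropy μ X (fun ω => (jointOn ∅ W ω, Q ω)) = condEntropy μ X Q :=
  condEntropy_congr_right hμ X fun _ _ => by
    simp only [Prod.ext_iff, jointOn_eq_jointOn_iff, notMem_empty, IsEmpty.forall_iff,
      implies_true, true_and]

lemma condEntropy_jointOn_eq_sum (hμ : ∀ ω, 0 ≤ μ ω) (A : Fin n → Ω → V) (Y : Ω → U)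
    (Γ : Finset (Fin n)) :
    condEntropy μ (jointOn Γ A) Y =
      ∑ i ∈ Γ, condEntropy μ (A i) (fun ω => (jointOn (Γ.filter (· < i)) A ω, Y ω)) := by
  induction Γ using Finset.induction_on_max with
  | empty =>
    exact condEntropy_eq_zero_of_factorsThrough hμ fun _ _ _ =>
      jointOn_eq_jointOn_iff.2 fun i hi => absurd hi (notMem_empty i)
  | insert a s hlt ih =>
    have ha : a ∉ s := fun h => lt_irrefl a (hlt a h)
    have hfilter_a : (insert a s).filter (· < a) = s := by
      rw [filter_insert, if_neg (lt_irrefl a)]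
      exact filter_true_of_mem hlt
    have hfilter : ∀ i ∈ s, (insert a s).filter (· < i) = s.filter (· < i) := fun i hi => by
      rw [filter_insert, if_neg (lt_asymm (hlt i hi))]
    rw [condEntropy_jointOn_insert_left hμ, condEntropy_pair_left hμ, ih, sum_insert ha,
      hfilter_a, add_comm]
    congr 1
    exact sum_congr rfl fun i hi => by rw [hfilter i hi]

lemma choose_mul_condEntropy_jointOn_univ_le (hμ : ∀ ω, 0 ≤ μ ω) (A : Fin n → Ω → V)
    (Y : Ω → U) {K : ℕ} (hK : 1 ≤ K) :
    ((n - 1).choose (K - 1) : ℝ) * condEntropy μ (jointOn univ A) Y ≤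
      ∑ Γ ∈ powersetCard K univ, condEntropy μ (jointOn Γ A) Y := by
  set c : Fin n → ℝ := fun i =>
    condEntropy μ (A i) (fun ω => (jointOn (univ.filter (· < i)) A ω, Y ω))
  have hsubset : ∀ Γ : Finset (Fin n), ∑ i ∈ Γ, c i ≤ condEntropy μ (jointOn Γ A) Y := fun Γ => by
    rw [condEntropy_jointOn_eq_sum hμ]
    refine sum_le_sum fun i _ => condEntropy_le_of_factorsThrough_right hμ (A i) fun _ _ h => ?_
    obtain ⟨hA, hY⟩ := Prod.ext_iff.1 h
    exact Prod.ext (factorsThrough_jointOn_of_subset (filter_subset_filter _ (subset_univ Γ))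
      A hA) hY
  have hcount : ∀ i, #((powersetCard K (univ : Finset (Fin n))).filter (i ∈ ·)) =
      (n - 1).choose (K - 1) := fun i => by
    simpa [singleton_subset_iff] using
      card_filter_powersetCard_subset {i} (univ : Finset (Fin n)) K (subset_univ _) (by simpa)
  calc ((n - 1).choose (K - 1) : ℝ) * condEntropy μ (jointOn univ A) Y
      = ∑ i, ∑ Γ ∈ (powersetCard K univ).filter (i ∈ ·), c i := by
        simp only [condEntropy_jointOn_eq_sum hμ, mul_sum, sum_const, hcount, nsmul_eq_mul, c]
    _ = ∑ Γ ∈ powersetCard K univ, ∑ i ∈ Γ, c i := sum_comm' fun _ _ => by simp [and_comm]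
    _ ≤ _ := sum_le_sum fun Γ _ => hsubset Γ

end JointOn

lemma div_mul_condEntropy_jointOn_univ_le {Ω V U : Type*} [Fintype Ω] [Fintype V] [Fintype U]
    [DecidableEq V] [DecidableEq U] {μ : Ω → ℝ} (hμ : ∀ ω, 0 ≤ μ ω) {n K : ℕ} (hK : 1 ≤ K)
    (hKn : K ≤ n) {A A' : Fin n → Ω → V} (Y : Ω → U)
    (h : ∀ Γ : Finset (Fin n), #Γ = K →
      condEntropy μ (jointOn Γ A') Y = condEntropy μ (jointOn Γ A) Y) :
    (K / n : ℝ) * condEntropy μ (jointOn univ A') Y ≤ condEntropy μ (jointOn univ A) Y := by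
  have hchoose_pos : (0 : ℝ) < n.choose K := by exact_mod_cast Nat.choose_pos hKn
  have hchoose : (K / n : ℝ) = (n - 1).choose (K - 1) / n.choose K := by
    obtain ⟨m, rfl⟩ : ∃ m, n = m + 1 := ⟨n - 1, by omega⟩
    obtain ⟨k, rfl⟩ : ∃ k, K = k + 1 := ⟨K - 1, by omega⟩
    have := Nat.add_one_mul_choose_eq m k
    rw [div_eq_div_iff (by positivity) hchoose_pos.ne', Nat.add_sub_cancel, Nat.add_sub_cancel]
    exact_mod_cast (by rw [mul_comm, ← this, mul_comm])
  have hsum := calc ((n - 1).choose (K - 1) : ℝ) * condEntropy μ (jointOn univ A') Y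
      ≤ ∑ Γ ∈ powersetCard K univ, condEntropy μ (jointOn Γ A') Y :=
        choose_mul_condEntropy_jointOn_univ_le hμ A' Y hK
    _ = ∑ Γ ∈ powersetCard K univ, condEntropy μ (jointOn Γ A) Y :=
        sum_congr rfl fun Γ hΓ => h Γ (mem_powersetCard_univ.1 hΓ)
    _ ≤ ∑ _Γ ∈ powersetCard K univ, condEntropy μ (jointOn univ A) Y :=
        sum_le_sum fun Γ _ => condEntropy_le_of_factorsThrough_left hμ
          (factorsThrough_jointOn_of_subset (subset_univ Γ) A) Y
    _ = n.choose K * condEntropy μ (jointOn univ A) Y := by simp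
  rw [hchoose, div_mul_eq_mul_div, div_le_iff₀ hchoose_pos]
  linarith

lemma mul_geom_sum_le_of_peel {ι : Type*} [Fintype ι] [DecidableEq ι] {F : Finset ι → ι → ℝ}
    {L r : ℝ} (hr : 0 ≤ r) (hF : ∀ Λ θ, 0 ≤ F Λ θ)
    (hpeel : ∀ Λ θ, θ ∉ Λ → F Λ θ = L + F (insert θ Λ) θ)
    (hswap : ∀ Λ θ θ', r * F Λ θ' ≤ F Λ θ) {Λ : Finset ι} {θ : ι} (hθ : θ ∉ Λ) :
    L * ∑ i ∈ range #Λᶜ, r ^ i ≤ F Λ θ := by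
  obtain ⟨m, hm⟩ : ∃ m, #Λᶜ = m := ⟨_, rfl⟩
  induction m generalizing Λ θ with
  | zero => exact absurd hm (card_ne_zero_of_mem (mem_compl.2 hθ))
  | succ m ih =>
    have hm' : #(insert θ Λ)ᶜ = m := by
      rw [compl_insert, card_erase_of_mem (mem_compl.2 hθ), hm, Nat.add_sub_cancel]
    have hrest : r * (L * ∑ i ∈ range m, r ^ i) ≤ F (insert θ Λ) θ := by
      rcases ((insert θ Λ)ᶜ).eq_empty_or_nonempty with hempty | ⟨θ', hθ'⟩
      · rw [← hm', hempty]
        simpa using hF _ _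
      · have hθ'_le := ih (mem_compl.1 hθ') hm'
        rw [hm'] at hθ'_le
        exact (mul_le_mul_of_nonneg_left hθ'_le hr).trans (hswap _ θ θ')
    rw [hm, hpeel Λ θ hθ, geom_sum_succ]
    linarith

theorem coded_pir_answer_entropy_lower_bound_general
    {Ω α γ δ : Type*} [Fintype Ω] [Fintype α] [Fintype γ] [Fintype δ]
    [DecidableEq α] [DecidableEq γ] [DecidableEq δ]
    (N K M : ℕ) (hK : 1 ≤ K) (hKN : K ≤ N) (L : ℝ)
    (μ : Ω → ℝ) (hμ : ∀ ω, 0 ≤ μ ω)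
    (A : Fin M → Fin N → Ω → α) (W : Fin M → Ω → γ) (Q : Ω → δ)
    (hsym : ∀ θ θ' : Fin M, ∀ Λ : Finset (Fin M), ∀ Γ : Finset (Fin N), Γ.card = K →
      condEntropy μ (jointOn Γ (A θ)) (fun ω => (jointOn Λ W ω, Q ω)) =
        condEntropy μ (jointOn Γ (A θ')) (fun ω => (jointOn Λ W ω, Q ω)))
    (hcorr : ∀ θ : Fin M, ∀ Λ : Finset (Fin M),
      condEntropy μ (W θ)
        (fun ω => (jointOn Finset.univ (A θ) ω, jointOn Λ W ω, Q ω)) = 0)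
    (hrec : ∀ Λ : Finset (Fin M), ∀ θ : Fin M, θ ∉ Λ →
      condEntropy μ (W θ) (fun ω => (jointOn Λ W ω, Q ω)) = L) :
    ∀ θ : Fin M,
      condEntropy μ (jointOn Finset.univ (A θ)) Q ≥
        L * ∑ i ∈ Finset.range M, ((K : ℝ) / N) ^ i := by
  set F : Finset (Fin M) → Fin M → ℝ := fun Λ θ =>
    condEntropy μ (jointOn univ (A θ)) (fun ω => (jointOn Λ W ω, Q ω))
  have hpeel : ∀ Λ θ, θ ∉ Λ → F Λ θ = L + F (insert θ Λ) θ := fun Λ θ hθ => by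
    rw [← hrec Λ θ hθ]
    simp only [F, condEntropy_jointOn_insert_right hμ]
    exact condEntropy_eq_add_of_condEntropy_eq_zero hμ (hcorr θ Λ)
  have hswap : ∀ Λ θ θ', (K / N : ℝ) * F Λ θ' ≤ F Λ θ := fun Λ θ θ' =>
    div_mul_condEntropy_jointOn_univ_le hμ hK hKN _ fun Γ hΓ => hsym θ' θ Λ Γ hΓ
  intro θ
  have hbound := mul_geom_sum_le_of_peel (by positivity) (fun _ _ => condEntropy_nonneg hμ _ _)
    hpeel hswap (notMem_empty θ)
  simpa [F, condEntropy_jointOn_empty_right hμ] using hbound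

/-- Inequality (9) in the converse proof of the coded-PIR capacity theorem:
`H(A_θ^{[N]} | Q) ≥ L · ∑_{i=0}^{M-1} (K/N)^i`. -/
theorem coded_pir_answer_entropy_lower_bound
    {Ω α γ δ : Type*} [Fintype Ω] [Fintype α] [Fintype γ] [Fintype δ]
    [DecidableEq α] [DecidableEq γ] [DecidableEq δ]
    (N K M : ℕ) (hK : 1 ≤ K) (hKN : K ≤ N) (hM : 1 ≤ M) (L : ℝ) (hL : 0 ≤ L)
    (μ : Ω → ℝ) (hμ : ∀ ω, 0 ≤ μ ω) (hμ1 : ∑ ω, μ ω = 1)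
    (A : Fin M → Fin N → Ω → α) (W : Fin M → Ω → γ) (Q : Ω → δ)
    (hsym : ∀ θ θ' : Fin M, ∀ Λ : Finset (Fin M), ∀ Γ : Finset (Fin N), Γ.card = K →
      condEntropy μ (jointOn Γ (A θ)) (fun ω => (jointOn Λ W ω, Q ω)) =
        condEntropy μ (jointOn Γ (A θ')) (fun ω => (jointOn Λ W ω, Q ω)))
    (hcorr : ∀ θ : Fin M, ∀ Λ : Finset (Fin M),
      condEntropy μ (W θ)
        (fun ω => (jointOn Finset.univ (A θ) ω, jointOn Λ W ω, Q ω)) = 0)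
    (hrec : ∀ Λ : Finset (Fin M), ∀ θ : Fin M, θ ∉ Λ →
      condEntropy μ (W θ) (fun ω => (jointOn Λ W ω, Q ω)) = L)
    (hdet : ∀ θ : Fin M,
      condEntropy μ (jointOn Finset.univ (A θ))
        (fun ω => (jointOn Finset.univ W ω, Q ω)) = 0) :
    ∀ θ : Fin M,
      condEntropy μ (jointOn Finset.univ (A θ)) Q ≥
        L * ∑ i ∈ Finset.range M, ((K : ℝ) / N) ^ i :=
  coded_pir_answer_entropy_lower_bound_general N K M hK hKN L μ hμ A W Q hsym hcorr hrec
end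

section
/- Let M \geq 2 and let n, k be integers with 1 \leq k and 2k \leq n. For 1 \leq j \leq M define \alpha_j = k^{M-j+1}\cdot((n-k)^{j-1} - (-k)^{j-1})/n, and define \beta_1 = k^{M-1} and, for 2 \leq j \leq M, \beta_j = (n-k)\cdot k^{M-j+1}\cdot((n-k)^{j-2} - (-k)^{j-2})/n. Then: (i) n divides k^{M-j+1}((n-k)^{j-1} - (-k)^{j-1}) and n divides (n-k)k^{M-j+1}((n-k)^{j-2} - (-k)^{j-2}), so every \alpha_j and \beta_j is a nonnegative integer; (ii) k\beta_{j+1} = (n-k)\alpha_j and k\alpha_{j+1} = k\beta_j + (n-2k)\alpha_j for all 1 \leq j \leq M-1; (iii) k divides (n-k)\alpha_M; and (iv) (n-k)\alpha_j + k\beta_j = (n-k)^{j-1} k^{M-j+1} for all 1 \leq j \leq M. -/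
/-- Parameters of the capacity-achieving coded PIR scheme in the case `n ≥ 2k`:
the numbers `α_j = k^{M-j+1}((n-k)^{j-1} - (-k)^{j-1})/n` and
`β_1 = k^{M-1}`, `β_j = (n-k)k^{M-j+1}((n-k)^{j-2} - (-k)^{j-2})/n` (for `j ≥ 2`)
are nonnegative integers solving the recurrence system. -/
theorem pir_parameters_case_n_ge_two_k (M : ℕ) (hM : 2 ≤ M) (n k : ℤ)
    (hk : 1 ≤ k) (hn : 2 * k ≤ n)
    (α β : ℕ → ℤ)
    (hα : ∀ j, 1 ≤ j → j ≤ M →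
      α j = k ^ (M - j + 1) * ((n - k) ^ (j - 1) - (-k) ^ (j - 1)) / n)
    (hβ1 : β 1 = k ^ (M - 1))
    (hβ : ∀ j, 2 ≤ j → j ≤ M →
      β j = (n - k) * k ^ (M - j + 1) * ((n - k) ^ (j - 2) - (-k) ^ (j - 2)) / n) :
    (∀ j, 1 ≤ j → j ≤ M →
      n ∣ k ^ (M - j + 1) * ((n - k) ^ (j - 1) - (-k) ^ (j - 1))) ∧
    (∀ j, 2 ≤ j → j ≤ M →
      n ∣ (n - k) * k ^ (M - j + 1) * ((n - k) ^ (j - 2) - (-k) ^ (j - 2))) ∧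
    (∀ j, 1 ≤ j → j ≤ M → 0 ≤ α j ∧ 0 ≤ β j) ∧
    (∀ j, 1 ≤ j → j ≤ M - 1 →
      k * β (j + 1) = (n - k) * α j ∧
      k * α (j + 1) = k * β j + (n - 2 * k) * α j) ∧
    (k ∣ (n - k) * α M) ∧
    (∀ j, 1 ≤ j → j ≤ M →
      (n - k) * α j + k * β j = (n - k) ^ (j - 1) * k ^ (M - j + 1)) := by
  have hn0 : (0:ℤ) < n := by linarith
  have hk0 : (0:ℤ) ≤ k := by linarith
  -- key divisibility
  have hmod : (n - k) ≡ -k [ZMOD n] := by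
    have : n ∣ -k - (n - k) := ⟨-1, by ring⟩
    exact Int.modEq_iff_dvd.mpr this
  have hdvd : ∀ m : ℕ, n ∣ (n - k) ^ m - (-k) ^ m := by
    intro m
    have h := ((hmod.pow m).dvd : n ∣ (-k) ^ m - (n - k) ^ m)
    rwa [← neg_sub, dvd_neg] at h
  set d : ℕ → ℤ := fun m => ((n - k) ^ m - (-k) ^ m) / n with hd
  have hnd : ∀ m, n * d m = (n - k) ^ m - (-k) ^ m := fun m =>
    Int.mul_ediv_cancel' (hdvd m)
  have hd0 : d 0 = 0 := by simp [hd]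
  have hd1 : d 1 = 1 := by
    simp only [hd, pow_one]
    rw [show n - k - -k = n by ring]
    exact Int.ediv_self hn0.ne'
  have hdnn : ∀ m, 0 ≤ d m := by
    intro m
    apply Int.ediv_nonneg _ hn0.le
    have h1 : (-k) ^ m ≤ k ^ m := by
      calc (-k) ^ m ≤ |(-k) ^ m| := le_abs_self _
        _ = |(-k)| ^ m := by rw [abs_pow]
        _ = k ^ m := by rw [abs_neg, abs_of_nonneg hk0]
    have h2 : k ^ m ≤ (n - k) ^ m := pow_le_pow_left₀ hk0 (by linarith) m
    linarith
  have hdrec : ∀ m, d (m + 2) = (n - 2 * k) * d (m + 1) + (n - k) * k * d m := by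
    intro m
    apply mul_left_cancel₀ hn0.ne'
    rw [show n * ((n - 2 * k) * d (m + 1) + (n - k) * k * d m)
        = (n - 2 * k) * (n * d (m + 1)) + (n - k) * k * (n * d m) by ring,
      hnd, hnd, hnd]
    ring
  have hdsum : ∀ m, d (m + 1) + k * d m = (n - k) ^ m := by
    intro m
    apply mul_left_cancel₀ hn0.ne'
    rw [show n * (d (m + 1) + k * d m) = n * d (m + 1) + k * (n * d m) by ring,
      hnd, hnd]
    ring
  have hαd : ∀ j, 1 ≤ j → j ≤ M → α j = k ^ (M - j + 1) * d (j - 1) := by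
    intro j h1 h2
    rw [hα j h1 h2, Int.mul_ediv_assoc _ (hdvd _)]
  have hβd : ∀ j, 2 ≤ j → j ≤ M → β j = (n - k) * k ^ (M - j + 1) * d (j - 2) := by
    intro j h1 h2
    rw [hβ j h1 h2, Int.mul_ediv_assoc _ (hdvd _)]
  refine ⟨fun j _ _ => Dvd.dvd.mul_left (hdvd _) _,
    fun j _ _ => Dvd.dvd.mul_left (hdvd _) _, ?_, ?_, ?_, ?_⟩
  · intro j h1 h2
    constructor
    · rw [hαd j h1 h2]; exact mul_nonneg (pow_nonneg hk0 _) (hdnn _)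
    · rcases eq_or_lt_of_le h1 with h | h
      · rw [← h, hβ1]; exact pow_nonneg hk0 _
      · rw [hβd j h h2]
        exact mul_nonneg (mul_nonneg (by linarith) (pow_nonneg hk0 _)) (hdnn _)
  · intro j h1 h2
    have hjM : j + 1 ≤ M := by omega
    constructor
    · rw [hβd (j + 1) (by omega) hjM, hαd j h1 (by omega)]
      rw [show j + 1 - 2 = j - 1 by omega, show M - (j + 1) + 1 = M - j by omega,
        show M - j + 1 = (M - j) + 1 from rfl, pow_succ]
      ring
    · rcases eq_or_lt_of_le h1 with h | h
      · subst h
        rw [hαd 2 (by omega) hjM, hβ1, hαd 1 (by omega) (by omega)]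
        simp only [show (1:ℕ) - 1 = 0 from rfl, show (2:ℕ) - 1 = 1 from rfl, hd0, hd1]
        rw [show M - 2 + 1 = M - 1 by omega]
        ring
      · obtain ⟨i, rfl⟩ : ∃ i, j = i + 2 := ⟨j - 2, by omega⟩
        rw [hαd (i + 2 + 1) (by omega) hjM, hβd (i + 2) h (by omega),
          hαd (i + 2) (by omega) (by omega)]
        rw [show i + 2 + 1 - 1 = i + 2 by omega, show i + 2 - 1 = i + 1 by omega,
          show i + 2 - 2 = i by omega,
          show M - (i + 2 + 1) + 1 = M - (i + 2) by omega,
          show M - (i + 2) + 1 = (M - (i + 2)) + 1 from rfl, hdrec i, pow_succ]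
        ring
  · refine ⟨(n - k) * d (M - 1), ?_⟩
    rw [hαd M (by omega) le_rfl, show M - M + 1 = 1 by omega, pow_one]
    ring
  · intro j h1 h2
    rcases eq_or_lt_of_le h1 with h | h
    · rw [← h, hαd 1 (by omega) (by omega), hβ1]
      simp only [show (1:ℕ) - 1 = 0 from rfl, hd0, pow_zero, mul_zero, zero_add, one_mul]
      rw [pow_succ]
      ring
    · obtain ⟨i, rfl⟩ : ∃ i, j = i + 2 := ⟨j - 2, by omega⟩
      rw [hαd (i + 2) (by omega) h2, hβd (i + 2) h h2,
        show i + 2 - 1 = i + 1 by omega, show i + 2 - 2 = i by omega]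
      linear_combination (n - k) * k ^ (M - (i + 2) + 1) * hdsum i
end

section
/- Let M \geq 2 and let n, k be integers with 1 \leq k < n < 2k. For 1 \leq j \leq M define \alpha_j = k(n-k)^{j-1}\cdot(k^{M-j} - (k-n)^{M-j})/n and \beta_j = (n-k)^{j-1}\cdot(k^{M-j+1} - (k-n)^{M-j+1})/n. Then: (i) n divides k(n-k)^{j-1}(k^{M-j} - (k-n)^{M-j}) and n divides (n-k)^{j-1}(k^{M-j+1} - (k-n)^{M-j+1}), so every \alpha_j and \beta_j is a nonnegative integer; (ii) k\beta_{j+1} = (n-k)\alpha_j and k\alpha_{j+1} = k\beta_j + (n-2k)\alpha_j for all 1 \leq j \leq M-1; (iii) \alpha_M = 0 and \beta_M = (n-k)^{M-1}, so k divides (n-k)\alpha_M; and (iv) (n-k)\alpha_j + k\beta_j = (n-k)^{j-1} k^{M-j+1} for all 1 \leq j \leq M. -/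
/-- Parameters of the capacity-achieving coded PIR scheme in the case `k < n < 2k`:
the numbers `α_j = k(n-k)^{j-1}(k^{M-j} - (k-n)^{M-j})/n` and
`β_j = (n-k)^{j-1}(k^{M-j+1} - (k-n)^{M-j+1})/n` are nonnegative integers solving
the recurrence system, with `α_M = 0` and `β_M = (n-k)^{M-1}`. -/
theorem pir_parameters_case_n_lt_two_k (M : ℕ) (hM : 2 ≤ M) (n k : ℤ)
    (hk : 1 ≤ k) (hkn : k < n) (hn : n < 2 * k)
    (α β : ℕ → ℤ)
    (hα : ∀ j, 1 ≤ j → j ≤ M →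
      α j = k * (n - k) ^ (j - 1) * (k ^ (M - j) - (k - n) ^ (M - j)) / n)
    (hβ : ∀ j, 1 ≤ j → j ≤ M →
      β j = (n - k) ^ (j - 1) * (k ^ (M - j + 1) - (k - n) ^ (M - j + 1)) / n) :
    (∀ j, 1 ≤ j → j ≤ M →
      n ∣ k * (n - k) ^ (j - 1) * (k ^ (M - j) - (k - n) ^ (M - j))) ∧
    (∀ j, 1 ≤ j → j ≤ M →
      n ∣ (n - k) ^ (j - 1) * (k ^ (M - j + 1) - (k - n) ^ (M - j + 1))) ∧
    (∀ j, 1 ≤ j → j ≤ M → 0 ≤ α j ∧ 0 ≤ β j) ∧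
    (∀ j, 1 ≤ j → j ≤ M - 1 →
      k * β (j + 1) = (n - k) * α j ∧
      k * α (j + 1) = k * β j + (n - 2 * k) * α j) ∧
    (α M = 0 ∧ β M = (n - k) ^ (M - 1) ∧ k ∣ (n - k) * α M) ∧
    (∀ j, 1 ≤ j → j ≤ M →
      (n - k) * α j + k * β j = (n - k) ^ (j - 1) * k ^ (M - j + 1)) := by
  have hn0 : (0:ℤ) < n := by linarith
  have hn0' : n ≠ 0 := ne_of_gt hn0
  have hdvd : ∀ m : ℕ, n ∣ k ^ m - (k - n) ^ m := by
    intro m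
    have h := sub_dvd_pow_sub_pow k (k - n) m
    simpa using h
  set d : ℕ → ℤ := fun m => (k ^ m - (k - n) ^ m) / n with hdDef
  have hd : ∀ m, n * d m = k ^ m - (k - n) ^ m := by
    intro m
    exact Int.mul_ediv_cancel' (hdvd m)
  have hnk0 : (0:ℤ) ≤ n - k := by linarith
  have hdnonneg : ∀ m, 0 ≤ d m := by
    intro m
    apply Int.ediv_nonneg _ (le_of_lt hn0)
    have h1 : (k - n) ^ m ≤ |(k - n) ^ m| := le_abs_self _
    have h2 : |(k - n) ^ m| = |k - n| ^ m := abs_pow _ _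
    have h3 : |k - n| = n - k := by rw [abs_sub_comm]; exact abs_of_nonneg hnk0
    have h4 : (n - k) ^ m ≤ k ^ m := pow_le_pow_left₀ hnk0 (by linarith) m
    rw [h2, h3] at h1
    linarith
  have hα' : ∀ j, 1 ≤ j → j ≤ M → α j = k * (n - k) ^ (j - 1) * d (M - j) := by
    intro j h1 h2
    rw [hα j h1 h2, Int.mul_ediv_assoc _ (hdvd _)]
  have hβ' : ∀ j, 1 ≤ j → j ≤ M → β j = (n - k) ^ (j - 1) * d (M - j + 1) := by
    intro j h1 h2
    rw [hβ j h1 h2, Int.mul_ediv_assoc _ (hdvd _)]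
  refine ⟨fun j _ _ => (Dvd.dvd.mul_left (hdvd _) _),
    fun j _ _ => (Dvd.dvd.mul_left (hdvd _) _),
    fun j h1 h2 => ⟨by
      rw [hα' j h1 h2]
      exact mul_nonneg (mul_nonneg (by linarith) (pow_nonneg hnk0 _)) (hdnonneg _), by
      rw [hβ' j h1 h2]
      exact mul_nonneg (pow_nonneg hnk0 _) (hdnonneg _)⟩,
    ?_, ?_, ?_⟩
  · intro j h1 h2
    obtain ⟨i, rfl⟩ : ∃ i, j = i + 1 := ⟨j - 1, by omega⟩
    have hj2 : i + 1 + 1 ≤ M := by omega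
    obtain ⟨m, hm⟩ : ∃ m, M - (i + 1) = m + 1 := ⟨M - (i+1) - 1, by omega⟩
    have hm2 : M - (i + 1 + 1) = m := by omega
    rw [hα' (i+1) (by omega) (by omega), hβ' (i+1) (by omega) (by omega),
      hα' (i+1+1) (by omega) hj2, hβ' (i+1+1) (by omega) hj2, hm, hm2]
    simp only [Nat.add_sub_cancel]
    constructor
    · ring
    · apply mul_left_cancel₀ hn0'
      have e0 := hd m
      have e1 := hd (m + 1)
      have e2 := hd (m + 1 + 1)
      linear_combination (k * k * (n - k) ^ (i + 1)) * e0
        - (k * (n - k) ^ i) * e2 - ((n - 2 * k) * k * (n - k) ^ i) * e1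
  · have hMM : M - M = 0 := by omega
    have hαM : α M = 0 := by
      rw [hα' M (by omega) le_rfl, hMM]
      simp [hdDef]
    refine ⟨hαM, ?_, by simp [hαM]⟩
    rw [hβ' M (by omega) le_rfl, hMM]
    have hd1 : d (0 + 1) = 1 := by
      have h := hd (0 + 1)
      have h' : n * d (0 + 1) = n * 1 := by rw [h]; ring
      exact mul_left_cancel₀ hn0' h'
    rw [hd1, mul_one]
  · intro j h1 h2
    obtain ⟨m, hm⟩ : ∃ m, M - j = m := ⟨M - j, rfl⟩
    rw [hα' j h1 h2, hβ' j h1 h2, hm]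
    apply mul_left_cancel₀ hn0'
    have e0 := hd m
    have e1 := hd (m + 1)
    linear_combination ((n - k) * k * (n - k) ^ (j - 1)) * e0
      + (k * (n - k) ^ (j - 1)) * e1
end
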